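/- arXiv:1411.1179 — 5 statements merged into one kernel-verified Lean document; each statement's English description precedes it below -/
import Mathlib

section
/- Let Z be standard normal and h: ℝ → ℝ continuous with E|h(Z)| < ∞. Define f_h by f_h(x) = e^{x²/2} ∫_{-∞}^{x} (h(t) − E h(Z)) e^{-t²/2} dt. Then f_h is differentiable and satisfies f_h'(x) − x f_h(x) = h(x) − E h(Z) for all x ∈ ℝ. -/
/-!
Split `∫_{-∞}^y` at a fixed point so that the fundamental theorem of calculus gives its derivative,
and apply the product rule to `e^{y²/2}` times that integral; the factor `e^{x²/2}` cancels the
Gaussian weight `e^{-x²/2}` in the integrand.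
-/

open MeasureTheory ProbabilityTheory Real Set

lemma integrable_mul_exp_of_integrable_gaussianReal {f : ℝ → ℝ} {μ : ℝ} {v : NNReal}
    (hv : v ≠ 0) (hf : Integrable f (gaussianReal μ v)) :
    Integrable (fun t => f t * exp (-(t - μ) ^ 2 / (2 * v))) := by
  rw [gaussianReal_of_var_ne_zero _ hv, integrable_withDensity_iff_integrable_smul'
    (measurable_gaussianPDF μ v) (ae_of_all _ fun _ => gaussianPDF_lt_top)] at hf
  have hc : √(2 * π * v) ≠ 0 := by positivity
  refine (hf.const_mul √(2 * π * v)).congr (ae_of_all _ fun t => ?_)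
  simp only [toReal_gaussianPDF, gaussianPDFReal, smul_eq_mul]
  field_simp

theorem hasDerivAt_integral_Iio {E : Type*} [NormedAddCommGroup E] [NormedSpace ℝ E]
    [CompleteSpace E] {g : ℝ → E} (hg : Continuous g) (hgi : Integrable g) (x : ℝ) :
    HasDerivAt (fun y => ∫ t in Iio y, g t) (g x) x := by
  have hsplit : ∀ y, ∫ t in Iio y, g t = (∫ t in Iic 0, g t) + ∫ t in (0 : ℝ)..y, g t := by
    intro y
    rw [← integral_Iic_eq_integral_Iio,
      ← intervalIntegral.integral_Iic_sub_Iic hgi.integrableOn hgi.integrableOn,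
      add_sub_cancel]
  simp only [hsplit]
  exact (hg.integral_hasStrictDerivAt 0 x).hasDerivAt.const_add _

theorem hasDerivAt_exp_sq_div_two_mul {F : ℝ → ℝ} {c x : ℝ} (hF : HasDerivAt F c x) :
    HasDerivAt (fun y => exp (y ^ 2 / 2) * F y) (exp (x ^ 2 / 2) * c + x * (exp (x ^ 2 / 2) * F x))
      x := by
  have hexp : HasDerivAt (fun y => exp (y ^ 2 / 2)) (exp (x ^ 2 / 2) * x) x := by
    simpa using ((hasDerivAt_pow 2 x).div_const 2).exp
  exact (hexp.mul hF).congr_deriv (by ring)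

theorem stein_equation_normal_general
    (h : ℝ → ℝ) (hcont : Continuous h)
    (hint : Integrable h (gaussianReal 0 1))
    (m : ℝ)
    (fh : ℝ → ℝ)
    (hfh : fh = fun x => Real.exp (x ^ 2 / 2) *
      ∫ t in Set.Iio x, (h t - m) * Real.exp (-t ^ 2 / 2)) :
    ∀ x : ℝ, HasDerivAt fh (h x - m + x * fh x) x := by
  intro x
  subst hfh
  have hg : Integrable (fun t => (h t - m) * exp (-t ^ 2 / 2)) := by
    simpa using integrable_mul_exp_of_integrable_gaussianReal one_ne_zero
      (hint.sub (integrable_const m))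
  convert hasDerivAt_exp_sq_div_two_mul (hasDerivAt_integral_Iio (by fun_prop) hg x) using 2
  rw [mul_left_comm, ← exp_add, neg_div, add_neg_cancel, exp_zero, mul_one]

theorem stein_equation_normal
    (h : ℝ → ℝ) (hcont : Continuous h)
    (hint : Integrable h (gaussianReal 0 1))
    (m : ℝ) (hm : m = ∫ x, h x ∂(gaussianReal 0 1))
    (fh : ℝ → ℝ)
    (hfh : fh = fun x => Real.exp (x ^ 2 / 2) *
      ∫ t in Set.Iio x, (h t - m) * Real.exp (-t ^ 2 / 2)) :
    ∀ x : ℝ, HasDerivAt fh (h x - m + x * fh x) x :=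
  stein_equation_normal_general h hcont hint m fh hfh
end

section
/- Let X₁,…,Xₙ be i.i.d. with E X₁ = 0, E X₁² = 1/n, β = n^{3/2} E|X₁|³ < ∞, and W_{n−1} = ∑_{i=1}^{n−1} Xᵢ. Then for all real a < b, P(a ≤ W_{n−1} ≤ b) ≤ (b − a) + 2β/√n. -/
/-!
Write `S = X₁ + ⋯ + Xₙ`, `Tᵢ = S - Xᵢ` and `δ = n E|X₁|³ = β/√n`, and let `g` be the function
of slope one on `[a - δ, b + δ]`, constant outside, centred so that `|g| ≤ (b - a)/2 + δ`.
Since `E Xᵢ = 0` and `Tᵢ` is independent of `Xᵢ`, `E[Xᵢ g(S)] = E[Xᵢ (g(Tᵢ + Xᵢ) - g(Tᵢ))]`.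
When `Tᵢ ∈ [a, b]` the integrand is at least `|Xᵢ| min(|Xᵢ|, δ) ≥ Xᵢ² - |Xᵢ|³/(2δ)`, and it
is never negative since `g` is monotone, so by independence
`E[Xᵢ g(S)] ≥ P(Tᵢ ∈ [a, b]) / (2n)`. Each `Tᵢ` has the law of `W_{n-1}`, so summing over `i`
gives `P(a ≤ W_{n-1} ≤ b) / 2 ≤ E[S g(S)]`, while
`E[S g(S)] ≤ ((b - a)/2 + δ) E|S| ≤ (b - a)/2 + δ` because `E S² = 1`.
-/

open MeasureTheory ProbabilityTheory Set

noncomputable def steinTest (a b δ y : ℝ) : ℝ := max (a - δ) (min (b + δ) y) - (a + b) / 2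

section steinTest

variable {a b δ : ℝ}

lemma steinTest_monotone : Monotone (steinTest a b δ) := fun _ _ h =>
  sub_le_sub_right (max_le_max le_rfl (min_le_min le_rfl h)) _

lemma measurable_steinTest : Measurable (steinTest a b δ) :=
  steinTest_monotone.measurable

lemma abs_steinTest_le (hab : a ≤ b) (hδ : 0 ≤ δ) (y : ℝ) :
    |steinTest a b δ y| ≤ (b - a) / 2 + δ := by
  have := le_max_left (a - δ) (min (b + δ) y)
  have : max (a - δ) (min (b + δ) y) ≤ b + δ := max_le (by linarith) (min_le_left _ _)
  rw [steinTest, abs_le]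
  constructor <;> linarith

lemma mul_steinTest_sub_nonneg (w x : ℝ) :
    0 ≤ x * (steinTest a b δ (w + x) - steinTest a b δ w) := by
  rcases le_total 0 x with hx | hx
  · exact mul_nonneg hx (sub_nonneg.2 (steinTest_monotone (le_add_of_nonneg_right hx)))
  · exact mul_nonneg_of_nonpos_of_nonpos hx
      (sub_nonpos.2 (steinTest_monotone (add_le_of_nonpos_right hx)))

lemma abs_mul_min_le_mul_steinTest_sub (hδ : 0 ≤ δ) {w : ℝ} (hw : w ∈ Icc a b) (x : ℝ) :
    |x| * min |x| δ ≤ x * (steinTest a b δ (w + x) - steinTest a b δ w) := by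
  obtain ⟨haw, hwb⟩ := hw
  have hgw : steinTest a b δ w = w - (a + b) / 2 := by
    rw [steinTest, min_eq_right (by linarith), max_eq_right (by linarith)]
  rw [hgw, steinTest]
  rcases le_total 0 x with hx | hx
  · have : min x δ ≤ max (a - δ) (min (b + δ) (w + x)) - w := by
      rw [le_sub_iff_add_le']
      refine le_max_of_le_right (le_min ?_ ?_) <;> linarith [min_le_left x δ, min_le_right x δ]
    rw [abs_of_nonneg hx]
    nlinarith
  · have : max (a - δ) (min (b + δ) (w + x)) - w ≤ -min (-x) δ := by
      rw [← max_neg_neg, neg_neg, sub_le_iff_le_add', max_le_iff, min_eq_right (by linarith)]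
      constructor <;> [linarith [le_max_right x (-δ)]; linarith [le_max_left x (-δ)]]
    rw [abs_of_nonpos hx]
    nlinarith

lemma indicator_mul_le_mul_steinTest_sub (hδ : 0 ≤ δ) (w x : ℝ) :
    (Icc a b).indicator 1 w * (|x| * min |x| δ) ≤
      x * (steinTest a b δ (w + x) - steinTest a b δ w) := by
  by_cases hw : w ∈ Icc a b
  · simpa [hw] using abs_mul_min_le_mul_steinTest_sub hδ hw x
  · simpa [hw] using mul_steinTest_sub_nonneg w x

end steinTest

lemma sq_sub_abs_pow_three_div_le {δ : ℝ} (hδ : 0 < δ) (x : ℝ) :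
    x ^ 2 - |x| ^ 3 / (2 * δ) ≤ |x| * min |x| δ := by
  have hx := abs_nonneg x
  rw [← sq_abs]
  rcases le_total |x| δ with h | h
  · rw [min_eq_left h, ← sq]
    linarith [show 0 ≤ |x| ^ 3 / (2 * δ) by positivity]
  · rw [min_eq_right h, sub_le_iff_le_add, ← sub_le_iff_le_add', le_div_iff₀ (by positivity)]
    nlinarith [mul_nonneg hx (sq_nonneg (|x| - δ)), mul_nonneg hx (mul_pos hδ hδ).le]

section moments

variable {Ω : Type*} [MeasurableSpace Ω] {μ : Measure Ω} {a b δ : ℝ}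

lemma memLp_two_of_integrable_abs_pow_three [IsFiniteMeasure μ] {X : Ω → ℝ}
    (hX : AEStronglyMeasurable X μ) (h : Integrable (fun ω => |X ω| ^ 3) μ) : MemLp X 2 μ :=
  (memLp_two_iff_integrable_sq_norm hX).2 <| integrable_norm_pow_of_le (p := 2) (q := 3) hX
    (by norm_num) (by simpa only [Real.norm_eq_abs] using h)

lemma integral_abs_pow_three_pos {X : Ω → ℝ} (h3 : Integrable (fun ω => |X ω| ^ 3) μ)
    (h2 : ∫ ω, X ω ^ 2 ∂μ ≠ 0) : 0 < ∫ ω, |X ω| ^ 3 ∂μ := by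
  refine (integral_nonneg fun ω => by positivity).lt_of_ne fun h => h2 ?_
  have hz := (integral_eq_zero_iff_of_nonneg (fun ω => by positivity) h3).1 h.symm
  refine integral_eq_zero_of_ae (hz.mono fun ω hω => ?_)
  simpa using hω

lemma MeasureTheory.Integrable.mul_steinTest_comp {X Y : Ω → ℝ} (hX : Integrable X μ)
    (hY : AEMeasurable Y μ) (hab : a ≤ b) (hδ : 0 ≤ δ) :
    Integrable (fun ω => X ω * steinTest a b δ (Y ω)) μ :=
  hX.mul_bdd (measurable_steinTest.comp_aemeasurable hY).aestronglyMeasurable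
    (ae_of_all _ fun ω => abs_steinTest_le hab hδ (Y ω))

lemma integral_mul_steinTest_le {S : Ω → ℝ} (hS : Integrable S μ) (hab : a ≤ b) (hδ : 0 ≤ δ) :
    ∫ ω, S ω * steinTest a b δ (S ω) ∂μ ≤ ((b - a) / 2 + δ) * ∫ ω, |S ω| ∂μ := by
  rw [← integral_const_mul]
  refine integral_mono (hS.mul_steinTest_comp hS.aemeasurable hab hδ) (hS.abs.const_mul _)
    fun ω => ?_
  rw [mul_comm]
  exact (le_abs_self _).trans <| (abs_mul _ _).trans_le <|
    mul_le_mul_of_nonneg_right (abs_steinTest_le hab hδ (S ω)) (abs_nonneg _)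

lemma integral_sq_sum_eq_sum_integral_sq [IsFiniteMeasure μ] {ι : Type*} [Fintype ι]
    {X : ι → Ω → ℝ} (hindep : iIndepFun X μ) (hX : ∀ i, MemLp (X i) 2 μ)
    (hmean : ∀ i, ∫ ω, X i ω ∂μ = 0) :
    ∫ ω, (∑ i, X i ω) ^ 2 ∂μ = ∑ i, ∫ ω, X i ω ^ 2 ∂μ := by
  have hvar : Var[fun ω => ∑ i, X i ω; μ] = ∑ i, Var[X i; μ] := by
    rw [← Finset.sum_fn]
    exact IndepFun.variance_sum (fun i _ => hX i) fun i _ j _ hij => hindep.indepFun hij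
  have hmean_sum : ∫ ω, ∑ i, X i ω ∂μ = 0 := by
    rw [integral_finsetSum _ fun i _ => (hX i).integrable one_le_two]
    simp [hmean]
  rw [← variance_of_integral_eq_zero
    (Finset.aemeasurable_fun_sum _ fun i _ => (hX i).aemeasurable) hmean_sum, hvar]
  exact Finset.sum_congr rfl fun i _ => variance_of_integral_eq_zero (hX i).aemeasurable (hmean i)

lemma identDistrib_sum_of_card_eq {ι : Type*} {X : ι → Ω → ℝ} (hindep : iIndepFun X μ)
    (hident : ∀ i j, IdentDistrib (X i) (X j) μ μ) {s t : Finset ι} (hst : s.card = t.card) :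
    IdentDistrib (fun ω => ∑ i ∈ s, X i ω) (fun ω => ∑ i ∈ t, X i ω) μ μ := by
  let e := Finset.equivOfCardEq hst
  have hpi := IdentDistrib.pi (fun k : s => hident k (e k))
    (hindep.precomp Subtype.val_injective) (hindep.precomp (Subtype.val_injective.comp e.injective))
  convert hpi.comp (u := fun x : s → ℝ => ∑ k, x k) (by fun_prop) using 1
  · ext ω
    exact (Finset.sum_coe_sort s fun i => X i ω).symm
  · ext ω
    exact (e.sum_comp fun k => X k ω).trans (Finset.sum_coe_sort t fun i => X i ω) |>.symm

lemma integral_abs_le_sqrt_integral_sq [IsProbabilityMeasure μ] {S : Ω → ℝ} (hS : MemLp S 2 μ) :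
    ∫ ω, |S ω| ∂μ ≤ √(∫ ω, S ω ^ 2 ∂μ) := by
  have hvar := variance_eq_sub hS.abs
  have := variance_nonneg |S| μ
  simp only [Pi.pow_apply, Pi.abs_apply, sq_abs] at hvar
  exact Real.le_sqrt_of_sq_le (by linarith)

lemma measureReal_mul_le_integral_mul_steinTest [IsFiniteMeasure μ] {T X : Ω → ℝ}
    (hT : Measurable T) (hX : Measurable X) (hTX : IndepFun T X μ)
    (hX3 : Integrable (fun ω => |X ω| ^ 3) μ) (hmean : ∫ ω, X ω ∂μ = 0) (hab : a ≤ b) (hδ : 0 < δ) :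
    μ.real (T ⁻¹' Icc a b) * (∫ ω, X ω ^ 2 ∂μ - (∫ ω, |X ω| ^ 3 ∂μ) / (2 * δ))
      ≤ ∫ ω, X ω * steinTest a b δ (T ω + X ω) ∂μ := by
  set g := steinTest a b δ
  set F : ℝ → ℝ := fun x => |x| * min |x| δ
  set χ : ℝ → ℝ := (Icc a b).indicator 1
  have hX2 := memLp_two_of_integrable_abs_pow_three hX.aestronglyMeasurable hX3
  have hF : Measurable F := by fun_prop
  have hχ : Measurable χ := measurable_one.indicator measurableSet_Icc
  have hFX : Integrable (fun ω => F (X ω)) μ := by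
    refine (hX2.integrable one_le_two).norm.const_mul δ |>.mono' (hF.comp hX).aestronglyMeasurable
      (ae_of_all _ fun ω => ?_)
    rw [Real.norm_eq_abs, abs_of_nonneg (by positivity), mul_comm]
    exact mul_le_mul_of_nonneg_left (min_le_right _ _) (abs_nonneg _)
  have hXgT : Integrable (fun ω => X ω * g (T ω)) μ :=
    (hX2.integrable one_le_two).mul_steinTest_comp hT.aemeasurable hab hδ.le
  have hXgS : Integrable (fun ω => X ω * g (T ω + X ω)) μ :=
    (hX2.integrable one_le_two).mul_steinTest_comp (hT.add hX).aemeasurable hab hδ.le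
  have hXgT_zero : ∫ ω, X ω * g (T ω) ∂μ = 0 :=
    ((hTX.comp measurable_steinTest measurable_id).symm.integral_fun_mul_eq_mul_integral
      hX.aestronglyMeasurable (measurable_steinTest.comp hT).aestronglyMeasurable).trans
      (by simp [hmean])
  have hχF : ∫ ω, χ (T ω) * F (X ω) ∂μ = μ.real (T ⁻¹' Icc a b) * ∫ ω, F (X ω) ∂μ :=
    ((hTX.comp hχ hF).integral_fun_mul_eq_mul_integral (hχ.comp hT).aestronglyMeasurable
      (hF.comp hX).aestronglyMeasurable).trans <| by
        rw [← integral_indicator_one (hT measurableSet_Icc)]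
        rfl
  calc μ.real (T ⁻¹' Icc a b) * (∫ ω, X ω ^ 2 ∂μ - (∫ ω, |X ω| ^ 3 ∂μ) / (2 * δ))
      ≤ μ.real (T ⁻¹' Icc a b) * ∫ ω, F (X ω) ∂μ := by
        rw [← integral_div, ← integral_sub hX2.integrable_sq (hX3.div_const _)]
        exact mul_le_mul_of_nonneg_left (integral_mono (hX2.integrable_sq.sub (hX3.div_const _))
          hFX fun ω => sq_sub_abs_pow_three_div_le hδ (X ω)) measureReal_nonneg
    _ = ∫ ω, χ (T ω) * F (X ω) ∂μ := hχF.symm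
    _ ≤ ∫ ω, X ω * (g (T ω + X ω) - g (T ω)) ∂μ := by
        refine integral_mono ?_ ?_ fun ω => ?_
        · refine hFX.bdd_mul (c := 1) (hχ.comp hT).aestronglyMeasurable (ae_of_all _ fun ω => ?_)
          by_cases hTω : T ω ∈ Icc a b <;> simp [χ, hTω]
        · simp_rw [mul_sub]
          exact hXgS.sub hXgT
        · exact indicator_mul_le_mul_steinTest_sub hδ.le (T ω) (X ω)
    _ = ∫ ω, X ω * g (T ω + X ω) ∂μ := by
        simp_rw [mul_sub]
        rw [integral_sub hXgS hXgT, hXgT_zero, sub_zero]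

lemma sum_measureReal_mul_le_integral_sum_mul_steinTest [IsFiniteMeasure μ] {ι : Type*}
    [Fintype ι] [DecidableEq ι] {X : ι → Ω → ℝ} (hmeas : ∀ i, Measurable (X i))
    (hindep : iIndepFun X μ)
    (h3 : ∀ i, Integrable (fun ω => |X i ω| ^ 3) μ) (hmean : ∀ i, ∫ ω, X i ω ∂μ = 0)
    (hab : a ≤ b) (hδ : 0 < δ) :
    ∑ i, μ.real ((fun ω => ∑ j ∈ Finset.univ.erase i, X j ω) ⁻¹' Icc a b) *
        (∫ ω, X i ω ^ 2 ∂μ - (∫ ω, |X i ω| ^ 3 ∂μ) / (2 * δ))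
      ≤ ∫ ω, (∑ i, X i ω) * steinTest a b δ (∑ i, X i ω) ∂μ := by
  have hT : ∀ i, Measurable fun ω => ∑ j ∈ Finset.univ.erase i, X j ω := fun i =>
    Finset.measurable_fun_sum _ fun j _ => hmeas j
  have hS : ∀ i ω, ∑ i, X i ω = ∑ j ∈ Finset.univ.erase i, X j ω + X i ω := fun i ω =>
    (Finset.sum_erase_add _ _ (Finset.mem_univ i)).symm
  simp_rw [Finset.sum_mul]
  rw [integral_finsetSum _ fun i _ =>
    ((memLp_two_of_integrable_abs_pow_three (hmeas i).aestronglyMeasurable (h3 i)).integrable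
      one_le_two).mul_steinTest_comp (Finset.aemeasurable_fun_sum _ fun j _ =>
        (hmeas j).aemeasurable) hab hδ.le]
  refine Finset.sum_le_sum fun i _ => ?_
  simp_rw [hS i]
  refine measureReal_mul_le_integral_mul_steinTest (hT i) (hmeas i) ?_ (h3 i) (hmean i) hab hδ
  simpa only [Finset.sum_fn] using
    hindep.indepFun_finsetSum_of_notMem hmeas (Finset.notMem_erase i _)

lemma sum_measureReal_mul_le_mul_sqrt_sum_integral_sq [IsProbabilityMeasure μ] {ι : Type*}
    [Fintype ι] [DecidableEq ι] {X : ι → Ω → ℝ} (hmeas : ∀ i, Measurable (X i))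
    (hindep : iIndepFun X μ)
    (h3 : ∀ i, Integrable (fun ω => |X i ω| ^ 3) μ) (hmean : ∀ i, ∫ ω, X i ω ∂μ = 0)
    (hab : a ≤ b) (hδ : 0 < δ) :
    ∑ i, μ.real ((fun ω => ∑ j ∈ Finset.univ.erase i, X j ω) ⁻¹' Icc a b) *
        (∫ ω, X i ω ^ 2 ∂μ - (∫ ω, |X i ω| ^ 3 ∂μ) / (2 * δ))
      ≤ ((b - a) / 2 + δ) * √(∑ i, ∫ ω, X i ω ^ 2 ∂μ) := by
  have hX2 : ∀ i, MemLp (X i) 2 μ := fun i =>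
    memLp_two_of_integrable_abs_pow_three (hmeas i).aestronglyMeasurable (h3 i)
  have hS2 := memLp_finsetSum Finset.univ fun i _ => hX2 i
  calc _ ≤ ∫ ω, (∑ i, X i ω) * steinTest a b δ (∑ i, X i ω) ∂μ :=
        sum_measureReal_mul_le_integral_sum_mul_steinTest hmeas hindep h3 hmean hab hδ
    _ ≤ ((b - a) / 2 + δ) * ∫ ω, |∑ i, X i ω| ∂μ :=
        integral_mul_steinTest_le (hS2.integrable one_le_two) hab hδ.le
    _ ≤ ((b - a) / 2 + δ) * √(∫ ω, (∑ i, X i ω) ^ 2 ∂μ) :=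
        mul_le_mul_of_nonneg_left (integral_abs_le_sqrt_integral_sq hS2) (by linarith)
    _ = ((b - a) / 2 + δ) * √(∑ i, ∫ ω, X i ω ^ 2 ∂μ) := by
        rw [integral_sq_sum_eq_sum_integral_sq hindep hX2 hmean]

end moments

theorem stein_concentration_inequality
    {Ω : Type*} [MeasurableSpace Ω] (μ : Measure Ω) [IsProbabilityMeasure μ]
    (n : ℕ) (hn : 0 < n) (X : Fin n → Ω → ℝ)
    (hmeas : ∀ i, Measurable (X i))
    (hindep : iIndepFun X μ)
    (hident : ∀ i j, IdentDistrib (X i) (X j) μ μ)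
    (hmean : ∀ i, ∫ ω, X i ω ∂μ = 0)
    (hvar : ∀ i, ∫ ω, (X i ω) ^ 2 ∂μ = 1 / n)
    (h3 : ∀ i, Integrable (fun ω => |X i ω| ^ 3) μ)
    (β : ℝ) (hβ : β = (n : ℝ) ^ ((3 : ℝ) / 2) * ∫ ω, |X ⟨0, hn⟩ ω| ^ 3 ∂μ)
    (Wn1 : Ω → ℝ)
    (hWn1 : Wn1 = fun ω => ∑ i ∈ Finset.univ.filter (fun i : Fin n => (i : ℕ) < n - 1), X i ω)
    (a b : ℝ) (hab : a < b) :
    (μ {ω | a ≤ Wn1 ω ∧ Wn1 ω ≤ b}).toReal ≤ (b - a) + 2 * β / Real.sqrt n := by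
  set γ := ∫ ω, |X ⟨0, hn⟩ ω| ^ 3 ∂μ
  have hnR : (0 : ℝ) < n := by exact_mod_cast hn
  have hγ : ∀ i, ∫ ω, |X i ω| ^ 3 ∂μ = γ := fun i =>
    ((hident i _).comp (by fun_prop : Measurable fun x : ℝ => |x| ^ 3)).integral_eq
  have hγpos : 0 < γ := integral_abs_pow_three_pos (h3 _) (by rw [hvar]; positivity)
  have hβδ : β / √n = n * γ := by
    rw [hβ, show (3 : ℝ) / 2 = 1 + 1 / 2 by norm_num, Real.rpow_add hnR, Real.rpow_one,
      ← Real.sqrt_eq_rpow]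
    field_simp
  have hlaw : ∀ i, μ.real ((fun ω => ∑ j ∈ Finset.univ.erase i, X j ω) ⁻¹' Icc a b) =
      (μ {ω | a ≤ Wn1 ω ∧ Wn1 ω ≤ b}).toReal := fun i => by
    rw [hWn1]
    exact congrArg ENNReal.toReal <| (identDistrib_sum_of_card_eq hindep hident
      (by simp [Fin.card_filter_val_lt])).measure_mem_eq measurableSet_Icc
  have key := sum_measureReal_mul_le_mul_sqrt_sum_integral_sq hmeas hindep h3 hmean hab.le
    (by positivity : 0 < (n : ℝ) * γ)
  simp only [hlaw, hvar, hγ, Finset.sum_const, Finset.card_univ, Fintype.card_fin,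
    nsmul_eq_mul, mul_one_div_cancel hnR.ne', Real.sqrt_one, mul_one] at key
  field_simp at key
  rw [mul_div_assoc, hβδ]
  linarith
end

section
/- Let W be a random variable on the nonnegative integers such that E[λ f(W+1) − W f(W)] = 0 for every bounded function f: ℤ_{≥0} → ℝ. Then W has the Poisson distribution with mean λ. -/
/-!
Testing the Stein identity against the indicator of `{k + 1}` gives the recurrence
`λ P(W = k) = (k + 1) P(W = k + 1)`, so `P(W = k) = P(W = 0) λ^k / k!`; since these masses
sum to `1`, the exponential series forces `P(W = 0) = e^{-λ}`.
-/

open MeasureTheory Nat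

lemma mul_pow_div_factorial_of_mul_eq_succ_mul {K : Type*} [Field K] [CharZero K]
    {p : ℕ → K} {l : K} (h : ∀ k, l * p k = (k + 1) * p (k + 1)) (k : ℕ) :
    p k = p 0 * l ^ k / k ! := by
  induction k with
  | zero => simp
  | succ k ih =>
    have hk : (k + 1 : K) ≠ 0 := by exact_mod_cast k.succ_ne_zero
    have hfac : (k ! : K) ≠ 0 := by exact_mod_cast k.factorial_ne_zero
    have hstep : p (k + 1) = l * p k / (k + 1) := by
      rw [h k, mul_div_cancel_left₀ _ hk]
    rw [hstep, ih, factorial_succ, cast_mul, cast_succ]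
    field_simp
    ring

lemma tsum_mul_pow_div_factorial (c x : ℝ) : ∑' k : ℕ, c * x ^ k / k ! = c * Real.exp x := by
  simp_rw [mul_div_assoc]
  rw [tsum_mul_left, Real.exp_eq_exp_ℝ, NormedSpace.exp_eq_tsum_div]

section

variable {Ω : Type*} [MeasurableSpace Ω]

lemma tsum_measureReal_fiber_eq_one (μ : Measure Ω) [IsProbabilityMeasure μ] {W : Ω → ℕ}
    (hW : Measurable W) : ∑' k, μ.real {ω | W ω = k} = 1 := by
  have h := tsum_measure_preimage_singleton (μ := μ) Set.countable_univ
    (fun k _ => hW (measurableSet_singleton k))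
  rw [tsum_univ (fun k => μ (W ⁻¹' {k})), Set.preimage_univ, measure_univ] at h
  simp only [Measure.real]
  rw [← ENNReal.tsum_toReal_eq (fun _ => measure_ne_top μ _)]
  exact (congrArg ENNReal.toReal h).trans ENNReal.toReal_one

lemma integral_stein_indicator_succ (μ : Measure Ω) [IsFiniteMeasure μ] {W : Ω → ℕ}
    (hW : Measurable W) (l : ℝ) (k : ℕ) :
    ∫ ω, (l * (if W ω + 1 = k + 1 then 1 else 0) - (W ω : ℝ) * (if W ω = k + 1 then 1 else 0)) ∂μ
      = l * μ.real {ω | W ω = k} - (k + 1) * μ.real {ω | W ω = k + 1} := by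
  have hfiber (j : ℕ) : MeasurableSet {ω | W ω = j} := hW (measurableSet_singleton j)
  have hpointwise : (fun ω => l * (if W ω + 1 = k + 1 then 1 else 0)
        - (W ω : ℝ) * (if W ω = k + 1 then 1 else 0))
      = {ω | W ω = k}.indicator (fun _ => l)
        - {ω | W ω = k + 1}.indicator (fun _ => (k + 1 : ℝ)) := by
    funext ω
    simp only [Pi.sub_apply, Set.indicator, Set.mem_ofPred_eq, add_left_inj]
    split_ifs <;> simp_all
  rw [hpointwise, integral_sub' ((integrable_const _).indicator (hfiber k))
      ((integrable_const _).indicator (hfiber (k + 1))),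
    integral_indicator_const _ (hfiber k), integral_indicator_const _ (hfiber (k + 1)),
    smul_eq_mul, smul_eq_mul, mul_comm l, mul_comm _ (_ + 1)]

end

theorem poisson_characterization_general
    {Ω : Type*} [MeasurableSpace Ω] (μ : Measure Ω) [IsProbabilityMeasure μ]
    (l : ℝ) (W : Ω → ℕ) (hWm : Measurable W)
    (hstein : ∀ f : ℕ → ℝ, (∃ C, ∀ j, |f j| ≤ C) →
      ∫ ω, (l * f (W ω + 1) - (W ω : ℝ) * f (W ω)) ∂μ = 0) :
    ∀ k : ℕ, μ {ω | W ω = k} =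
      ENNReal.ofReal (Real.exp (-l) * l ^ k / (Nat.factorial k)) := by
  set p : ℕ → ℝ := fun k => μ.real {ω | W ω = k}
  have hrec (k : ℕ) : l * p k = (k + 1) * p (k + 1) := by
    have hbdd : ∃ C, ∀ j, |(if j = k + 1 then (1 : ℝ) else 0)| ≤ C :=
      ⟨1, fun j => by split_ifs <;> simp⟩
    exact sub_eq_zero.mp ((integral_stein_indicator_succ μ hWm l k).symm.trans (hstein _ hbdd))
  have hclosed := mul_pow_div_factorial_of_mul_eq_succ_mul hrec
  have hp0 : p 0 = Real.exp (-l) := by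
    have htotal : p 0 * Real.exp l = 1 := by
      rw [← tsum_mul_pow_div_factorial, ← tsum_measureReal_fiber_eq_one μ hWm]
      exact tsum_congr fun k => (hclosed k).symm
    rw [Real.exp_neg]
    exact eq_inv_of_mul_eq_one_left htotal
  intro k
  rw [← hp0, ← hclosed k]
  exact (ofReal_measureReal).symm

theorem poisson_characterization
    {Ω : Type*} [MeasurableSpace Ω] (μ : Measure Ω) [IsProbabilityMeasure μ]
    (l : ℝ) (hl : 0 < l) (W : Ω → ℕ) (hWm : Measurable W)
    (hWint : Integrable (fun ω => (W ω : ℝ)) μ)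
    (hstein : ∀ f : ℕ → ℝ, (∃ C, ∀ j, |f j| ≤ C) →
      ∫ ω, (l * f (W ω + 1) - (W ω : ℝ) * f (W ω)) ∂μ = 0) :
    ∀ k : ℕ, μ {ω | W ω = k} =
      ENNReal.ofReal (Real.exp (-l) * l ^ k / (Nat.factorial k)) :=
  poisson_characterization_general μ l W hWm hstein
end

section
/- Let X₁,…,Xₙ be independent Bernoulli random variables with P(Xᵢ = 1) = pᵢ, W = ∑ᵢ Xᵢ, λ = ∑ᵢ pᵢ, and Z ~ Po(λ). Then for any bounded function h: ℤ_{≥0} → ℝ, |E h(W) − E h(Z)| ≤ (∑ᵢ pᵢ²) · ‖Δf_h‖_∞, where f_h solves the Poisson Stein equation λf(w+1) − wf(w) = h(w) − Eh(Z) and Δf(j) = f(j+1) − f(j). -/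
/-! Taking expectations in the Stein equation at `W` gives
`E h(W) - m = λ E f(W + 1) - E[W f(W)]`. Writing `W = Xᵢ + Wᵢ` with `Wᵢ` independent of `Xᵢ`,
the Bernoulli identity `Xᵢ f(W) = Xᵢ f(Wᵢ + 1)` gives `E[Xᵢ f(W)] = pᵢ E f(Wᵢ + 1)`, so the
difference is `∑ᵢ pᵢ E[f(Wᵢ + Xᵢ + 1) - f(Wᵢ + 1)]`. The integrand vanishes unless `Xᵢ = 1`, where
it is a single increment of `f`, so each expectation is at most `C pᵢ` in absolute value. -/

open MeasureTheory ProbabilityTheory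

section

variable {Ω : Type*} [MeasurableSpace Ω] {μ : Measure Ω}

lemma integrable_comp_of_le [IsFiniteMeasure μ] {T : Ω → ℕ} (hT : Measurable T) {N : ℕ}
    (hTN : ∀ ω, T ω ≤ N) (g : ℕ → ℝ) : Integrable (fun ω => g (T ω)) μ :=
  .of_bound (measurable_from_top.comp hT).aestronglyMeasurable
    (∑ k ∈ Finset.range (N + 1), |g k|)
    (.of_forall fun ω => Finset.single_le_sum (f := fun k => |g k|) (fun _ _ => abs_nonneg _)
      (Finset.mem_range.mpr (Nat.lt_succ_of_le (hTN ω))))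

lemma integral_natCast_of_le_one {X : Ω → ℕ} (hX : Measurable X) (hX1 : ∀ ω, X ω ≤ 1)
    {p : ℝ} (hp0 : 0 ≤ p) (hp : μ {ω | X ω = 1} = ENNReal.ofReal p) :
    ∫ ω, (X ω : ℝ) ∂μ = p := by
  have hind : (fun ω => (X ω : ℝ)) = {ω | X ω = 1}.indicator 1 := by
    ext ω
    rcases Nat.le_one_iff_eq_zero_or_eq_one.mp (hX1 ω) with h | h <;> simp [h]
  rw [hind, integral_indicator_one (s := {ω | X ω = 1}) (hX (measurableSet_singleton 1)),
    measureReal_def, hp, ENNReal.toReal_ofReal hp0]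

lemma integral_natCast_mul_comp_add {X Y : Ω → ℕ} (hX : Measurable X) (hY : Measurable Y)
    (hX1 : ∀ ω, X ω ≤ 1) (hXY : IndepFun X Y μ) (g : ℕ → ℝ) :
    ∫ ω, (X ω : ℝ) * g (X ω + Y ω) ∂μ = (∫ ω, (X ω : ℝ) ∂μ) * ∫ ω, g (Y ω + 1) ∂μ := by
  have hpt : ∀ ω, (X ω : ℝ) * g (X ω + Y ω) = (X ω : ℝ) * g (Y ω + 1) := fun ω => by
    rcases Nat.le_one_iff_eq_zero_or_eq_one.mp (hX1 ω) with h | h <;> simp [h, add_comm]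
  simp_rw [hpt]
  exact (hXY.comp (φ := fun k : ℕ => (k : ℝ)) (ψ := fun k => g (k + 1))
    measurable_from_top measurable_from_top).integral_mul_eq_mul_integral
    (measurable_from_top.comp hX).aestronglyMeasurable
    (measurable_from_top.comp hY).aestronglyMeasurable

lemma abs_integral_mul_integral_sub_integral_natCast_mul_le [IsFiniteMeasure μ] {X Y W : Ω → ℕ}
    (hX : Measurable X) (hY : Measurable Y) (hX1 : ∀ ω, X ω ≤ 1) (hXY : IndepFun X Y μ)
    {N : ℕ} (hYN : ∀ ω, Y ω ≤ N) (hW : ∀ ω, W ω = X ω + Y ω) {f : ℕ → ℝ} {C : ℝ}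
    (hC : ∀ j, |f (j + 1) - f j| ≤ C) :
    |(∫ ω, (X ω : ℝ) ∂μ) * ∫ ω, f (W ω + 1) ∂μ - ∫ ω, (X ω : ℝ) * f (W ω) ∂μ|
      ≤ (∫ ω, (X ω : ℝ) ∂μ) ^ 2 * C := by
  set p := ∫ ω, (X ω : ℝ) ∂μ
  have hp0 : 0 ≤ p := integral_nonneg fun ω => Nat.cast_nonneg _
  have hXN : ∀ ω, X ω + Y ω + 1 ≤ N + 2 := fun ω => by have := hX1 ω; have := hYN ω; omega
  have hdiff : ∀ ω, ‖f (X ω + Y ω + 1) - f (Y ω + 1)‖ ≤ C * X ω := fun ω => by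
    rcases Nat.le_one_iff_eq_zero_or_eq_one.mp (hX1 ω) with h | h
    · simp [h]
    · simpa [h, add_comm 1 (Y ω), add_assoc] using hC (Y ω + 1)
  calc |p * ∫ ω, f (W ω + 1) ∂μ - ∫ ω, (X ω : ℝ) * f (W ω) ∂μ|
      = p * |∫ ω, (f (X ω + Y ω + 1) - f (Y ω + 1)) ∂μ| := by
        simp_rw [hW, integral_natCast_mul_comp_add hX hY hX1 hXY f]
        rw [← mul_sub, ← integral_sub, abs_mul, abs_of_nonneg hp0]
        · exact integrable_comp_of_le ((hX.add hY).add measurable_const) hXN f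
        · exact integrable_comp_of_le (hY.add measurable_const)
            (fun ω => Nat.succ_le_succ (hYN ω)) f
    _ ≤ p * (C * p) := by
        gcongr
        rw [← integral_const_mul]
        exact norm_integral_le_of_norm_le ((integrable_comp_of_le hX hX1 _).const_mul C)
          (.of_forall hdiff)
    _ = p ^ 2 * C := by ring

lemma integral_comp_sub_eq_of_stein [IsProbabilityMeasure μ] {W : Ω → ℕ} (hW : Measurable W)
    {N : ℕ} (hWN : ∀ ω, W ω ≤ N) {h f : ℕ → ℝ} {l m : ℝ}
    (hf : ∀ w : ℕ, l * f (w + 1) - w * f w = h w - m) :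
    ∫ ω, h (W ω) ∂μ - m = l * ∫ ω, f (W ω + 1) ∂μ - ∫ ω, (W ω : ℝ) * f (W ω) ∂μ := by
  calc ∫ ω, h (W ω) ∂μ - m = ∫ ω, (h (W ω) - m) ∂μ := by
        rw [integral_sub (integrable_comp_of_le hW hWN h) (integrable_const m), integral_const,
          probReal_univ, one_smul]
    _ = ∫ ω, (l * f (W ω + 1) - W ω * f (W ω)) ∂μ := by simp_rw [hf]
    _ = _ := by
        rw [integral_sub ((integrable_comp_of_le hW hWN fun k => f (k + 1)).const_mul l)
          (integrable_comp_of_le hW hWN fun k => k * f k), integral_const_mul]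

lemma integral_natCast_sum_mul {ι : Type*} (s : Finset ι) {X : ι → Ω → ℕ} {g : ℕ → ℝ}
    (hint : ∀ i ∈ s, Integrable (fun ω => (X i ω : ℝ) * g (∑ j ∈ s, X j ω)) μ) :
    ∫ ω, ((∑ i ∈ s, X i ω : ℕ) : ℝ) * g (∑ i ∈ s, X i ω) ∂μ
      = ∑ i ∈ s, ∫ ω, (X i ω : ℝ) * g (∑ j ∈ s, X j ω) ∂μ := by
  push_cast
  simp_rw [Finset.sum_mul]
  exact integral_finsetSum s hint

end

theorem chen_stein_bound_general
    {Ω : Type*} [MeasurableSpace Ω] (μ : Measure Ω) [IsProbabilityMeasure μ]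
    (n : ℕ) (X : Fin n → Ω → ℕ) (p : Fin n → ℝ)
    (hmeas : ∀ i, Measurable (X i))
    (hindep : iIndepFun X μ)
    (h01 : ∀ i ω, X i ω ≤ 1)
    (hp : ∀ i, μ {ω | X i ω = 1} = ENNReal.ofReal (p i))
    (hp0 : ∀ i, 0 ≤ p i)
    (l : ℝ) (hl : l = ∑ i, p i)
    (W : Ω → ℕ) (hW : W = fun ω => ∑ i, X i ω)
    (h : ℕ → ℝ)
    (m : ℝ)
    (f : ℕ → ℝ) (hf : ∀ w : ℕ, l * f (w + 1) - (w : ℝ) * f w = h w - m)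
    (C : ℝ) (hC : ∀ j, |f (j + 1) - f j| ≤ C) :
    |(∫ ω, h (W ω) ∂μ) - m| ≤ (∑ i, p i ^ 2) * C := by
  subst hW
  have hmean : ∀ i, ∫ ω, (X i ω : ℝ) ∂μ = p i := fun i =>
    integral_natCast_of_le_one (hmeas i) (h01 i) (hp0 i) (hp i)
  have hWm : Measurable fun ω => ∑ i, X i ω := Finset.measurable_sum _ fun i _ => hmeas i
  have hWN : ∀ ω, ∑ i, X i ω ≤ n := fun ω => by
    simpa using Finset.sum_le_sum fun i (_ : i ∈ Finset.univ) => h01 i ω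
  have hsplit : ∀ i ω, ∑ j, X j ω = X i ω + ∑ j ∈ Finset.univ.erase i, X j ω := fun i ω =>
    (Finset.add_sum_erase _ (fun j => X j ω) (Finset.mem_univ i)).symm
  rw [integral_comp_sub_eq_of_stein hWm hWN hf, integral_natCast_sum_mul, hl, Finset.sum_mul,
    ← Finset.sum_sub_distrib, Finset.sum_mul]
  · refine (Finset.abs_sum_le_sum_abs _ _).trans (Finset.sum_le_sum fun i _ => ?_)
    have hindep_i : IndepFun (X i) (fun ω => ∑ j ∈ Finset.univ.erase i, X j ω) μ := by
      simpa only [Finset.sum_fn] using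
        (hindep.indepFun_finsetSum_of_notMem hmeas (Finset.notMem_erase i _)).symm
    rw [← hmean i]
    exact abs_integral_mul_integral_sub_integral_natCast_mul_le (N := n) (hmeas i)
      (Finset.measurable_sum _ fun j _ => hmeas j) (h01 i) hindep_i
      (fun ω => by have := hsplit i ω; have := hWN ω; omega) (hsplit i) hC
  · exact fun i _ => (integrable_comp_of_le hWm hWN f).bdd_mul (c := 1)
      (measurable_from_top.comp (hmeas i)).aestronglyMeasurable
      (.of_forall fun ω => by simpa using h01 i ω)

theorem chen_stein_bound
    {Ω : Type*} [MeasurableSpace Ω] (μ : Measure Ω) [IsProbabilityMeasure μ]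
    (n : ℕ) (X : Fin n → Ω → ℕ) (p : Fin n → ℝ)
    (hmeas : ∀ i, Measurable (X i))
    (hindep : iIndepFun X μ)
    (h01 : ∀ i ω, X i ω ≤ 1)
    (hp : ∀ i, μ {ω | X i ω = 1} = ENNReal.ofReal (p i))
    (hp0 : ∀ i, 0 ≤ p i) (hp1 : ∀ i, p i ≤ 1)
    (l : ℝ) (hl : l = ∑ i, p i)
    (W : Ω → ℕ) (hW : W = fun ω => ∑ i, X i ω)
    (h : ℕ → ℝ) (hhb : ∃ C, ∀ j, |h j| ≤ C)
    (m : ℝ) (hm : m = ∑' k : ℕ, h k * (Real.exp (-l) * l ^ k / (Nat.factorial k)))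
    (f : ℕ → ℝ) (hf : ∀ w : ℕ, l * f (w + 1) - (w : ℝ) * f w = h w - m)
    (C : ℝ) (hC : ∀ j, |f (j + 1) - f j| ≤ C) :
    |(∫ ω, h (W ω) ∂μ) - m| ≤ (∑ i, p i ^ 2) * C :=
  chen_stein_bound_general μ n X p hmeas hindep h01 hp hp0 l hl W hW h m f hf C hC
end

section
/- Suppose W = ∑_{i=1}^n Xᵢ where each Xᵢ is Bernoulli(pᵢ), and for each i write W = Xᵢ + Yᵢ + W̃ᵢ with Yᵢ a nonnegative-integer-valued random variable. Let λ = ∑ᵢ pᵢ and Z ~ Po(λ). Then for any bounded h: ℤ_{≥0} → ℝ, |E h(W) − E h(Z)| ≤ ∑ᵢ (pᵢ² + pᵢ E Yᵢ + E(Xᵢ Yᵢ)) ‖Δf_h‖_∞ + ∑ᵢ E|E(Xᵢ | W̃ᵢ) − pᵢ| · ‖f_h‖_∞, where f_h solves the Poisson Stein equation λ f(w+1) − w f(w) = h(w) − E h(Z). -/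
open MeasureTheory ProbabilityTheory

/-!
Stein's method. Evaluating the Stein equation at `W` gives
`E h(W) - m = ∑ i, E [p i * f (W + 1) - X i * f W]`, and each summand splits as
`p i * (f (W + 1) - f (W̃ i + 1)) + (p i - X i) * f (W̃ i + 1) + X i * (f (W̃ i + 1) - f W)`.
In the first term `W + 1` exceeds `W̃ i + 1` by `X i + Y i`, and in the third, on `X i = 1`,
`W` exceeds `W̃ i + 1` by `Y i`; both are then bounded by the increments of `f`. The middle term is
a function of `W̃ i` times `p i - X i`, so conditioning on `W̃ i` replaces `X i` by `E(X i | W̃ i)`.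
-/

lemma abs_sub_le_mul_of_abs_succ_sub_le {f : ℕ → ℝ} {C : ℝ}
    (hC : ∀ j, |f (j + 1) - f j| ≤ C) (a b : ℕ) : |f (a + b) - f a| ≤ C * b := by
  induction b with
  | zero => simp
  | succ b ih =>
    calc |f (a + (b + 1)) - f a| = |(f (a + b + 1) - f (a + b)) + (f (a + b) - f a)| := by
          rw [← add_assoc]; ring_nf
      _ ≤ C + C * b := (abs_add_le _ _).trans (add_le_add (hC _) ih)
      _ = C * ↑(b + 1) := by push_cast; ring

lemma abs_mul_sub_le_of_le_one {f : ℕ → ℝ} {C : ℝ} (hC : ∀ j, |f (j + 1) - f j| ≤ C)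
    {x : ℕ} (hx : x ≤ 1) (y z : ℕ) :
    |(x : ℝ) * (f (z + 1) - f (x + y + z))| ≤ C * (x * y) := by
  interval_cases x
  · simp
  · simpa [abs_sub_comm, add_comm, add_left_comm] using
      abs_sub_le_mul_of_abs_succ_sub_le hC (z + 1) y

section Integral

variable {Ω : Type*} {mΩ : MeasurableSpace Ω} {μ : Measure Ω}

lemma integral_natCast_eq_measureReal_of_le_one {ξ : Ω → ℕ} (hξ : Measurable ξ)
    (hξ1 : ∀ ω, ξ ω ≤ 1) :
    ∫ ω, (ξ ω : ℝ) ∂μ = μ.real {ω | ξ ω = 1} := by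
  have hind : (fun ω => (ξ ω : ℝ)) = {ω | ξ ω = 1}.indicator 1 := by
    ext ω
    rcases Nat.le_one_iff_eq_zero_or_eq_one.mp (hξ1 ω) with h | h <;> simp [h]
  exact hind ▸ integral_indicator_one (hξ (measurableSet_singleton 1))

lemma integrable_comp_of_abs_le [IsFiniteMeasure μ] {V : Ω → ℕ} (hV : Measurable V)
    {F : ℕ → ℝ} {C : ℝ} (hF : ∀ j, |F j| ≤ C) : Integrable (fun ω => F (V ω)) μ :=
  .of_bound (measurable_from_top.comp hV).aestronglyMeasurable C (ae_of_all _ fun _ => hF _)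

lemma integrable_natCast_of_le_one [IsFiniteMeasure μ] {ξ : Ω → ℕ} (hξ : Measurable ξ)
    (hξ1 : ∀ ω, ξ ω ≤ 1) : Integrable (fun ω => (ξ ω : ℝ)) μ :=
  .of_bound (measurable_from_top.comp hξ).aestronglyMeasurable 1
    (ae_of_all _ fun ω => by simpa using hξ1 ω)

lemma integral_mul_condExp [IsFiniteMeasure μ] {m : MeasurableSpace Ω} (hm : m ≤ mΩ)
    {g X : Ω → ℝ} (hg : StronglyMeasurable[m] g) {C : ℝ} (hgC : ∀ ω, |g ω| ≤ C)
    (hX : Integrable X μ) :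
    ∫ ω, g ω * X ω ∂μ = ∫ ω, g ω * (μ[X|m]) ω ∂μ := by
  rw [← integral_condExp hm]
  exact integral_congr_ae
    (condExp_stronglyMeasurable_mul_of_bound hm hg hX C (ae_of_all _ hgC))

lemma abs_integral_mul_const_sub_le [IsFiniteMeasure μ] {m : MeasurableSpace Ω}
    (hm : m ≤ mΩ) {g X : Ω → ℝ} (hg : StronglyMeasurable[m] g) {C : ℝ}
    (hgC : ∀ ω, |g ω| ≤ C) (hX : Integrable X μ) (c : ℝ) :
    |∫ ω, g ω * (c - X ω) ∂μ| ≤ (∫ ω, |(μ[X|m]) ω - c| ∂μ) * C := by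
  have hcX : Integrable (fun ω => c - X ω) μ := (integrable_const c).sub hX
  have hcond : μ[fun ω => c - X ω|m] =ᵐ[μ] fun ω => c - (μ[X|m]) ω := by
    filter_upwards [condExp_sub (integrable_const c) hX m] with ω hω
    rw [show (fun ω => c - X ω) = (fun _ => c) - X from rfl, hω, Pi.sub_apply,
      condExp_const (μ := μ) hm]
  rw [integral_mul_condExp hm hg hgC hcX, ← integral_mul_const (μ := μ), ← Real.norm_eq_abs]
  refine norm_integral_le_of_norm_le
    ((integrable_condExp.sub (integrable_const c)).abs.mul_const C) ?_
  filter_upwards [hcond] with ω hω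
  rw [hω, Real.norm_eq_abs, abs_mul, abs_sub_comm, mul_comm]
  exact mul_le_mul_of_nonneg_left (hgC ω) (abs_nonneg _)

variable {ξ η ζ V : Ω → ℕ} {f : ℕ → ℝ} {C₀ C₁ : ℝ}

lemma abs_integral_sub_comp_succ_le [IsFiniteMeasure μ] (hξ : Measurable ξ)
    (hξ1 : ∀ ω, ξ ω ≤ 1) (hVd : ∀ ω, V ω = ξ ω + η ω + ζ ω)
    (hη : Integrable (fun ω => (η ω : ℝ)) μ) (hC₁ : ∀ j, |f (j + 1) - f j| ≤ C₁)
    {p : ℝ} (hp0 : 0 ≤ p) :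
    |∫ ω, p * (f (V ω + 1) - f (ζ ω + 1)) ∂μ| ≤
      p * C₁ * (∫ ω, (ξ ω : ℝ) ∂μ + ∫ ω, (η ω : ℝ) ∂μ) := by
  have hξint := integrable_natCast_of_le_one (μ := μ) hξ hξ1
  have hdom : Integrable (fun ω => p * C₁ * ((ξ ω : ℝ) + η ω)) μ :=
    (hξint.add hη).const_mul _
  rw [← integral_add hξint hη, ← integral_const_mul (p * C₁), ← Real.norm_eq_abs]
  refine norm_integral_le_of_norm_le hdom (ae_of_all _ fun ω => ?_)
  have hstep := abs_sub_le_mul_of_abs_succ_sub_le hC₁ (ζ ω + 1) (ξ ω + η ω)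
  rw [show ζ ω + 1 + (ξ ω + η ω) = V ω + 1 by rw [hVd]; ring, Nat.cast_add] at hstep
  rw [Real.norm_eq_abs, abs_mul, abs_of_nonneg hp0, mul_assoc]
  exact mul_le_mul_of_nonneg_left hstep hp0

lemma abs_integral_mul_sub_comp_le (hξ1 : ∀ ω, ξ ω ≤ 1) (hVd : ∀ ω, V ω = ξ ω + η ω + ζ ω)
    (hξη : Integrable (fun ω => (ξ ω : ℝ) * η ω) μ) (hC₁ : ∀ j, |f (j + 1) - f j| ≤ C₁) :
    |∫ ω, ξ ω * (f (ζ ω + 1) - f (V ω)) ∂μ| ≤ C₁ * ∫ ω, (ξ ω : ℝ) * η ω ∂μ := by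
  rw [← integral_const_mul, ← Real.norm_eq_abs]
  refine norm_integral_le_of_norm_le (hξη.const_mul C₁) (ae_of_all _ fun ω => ?_)
  rw [Real.norm_eq_abs, hVd]
  exact abs_mul_sub_le_of_le_one hC₁ (hξ1 ω) _ _

lemma integrable_stein_summand [IsFiniteMeasure μ] (hξ : Measurable ξ) (hV : Measurable V)
    (hξ1 : ∀ ω, ξ ω ≤ 1) (hC₀ : ∀ j, |f j| ≤ C₀) (p : ℝ) :
    Integrable (fun ω => p * f (V ω + 1) - ξ ω * f (V ω)) μ :=
  ((integrable_comp_of_abs_le hV (F := fun j => f (j + 1)) fun _ => hC₀ _).const_mul p).sub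
    ((integrable_comp_of_abs_le hV hC₀).bdd_mul (c := 1)
      (measurable_from_top.comp hξ).aestronglyMeasurable
      (ae_of_all _ fun ω => by simpa using hξ1 ω))

theorem abs_integral_stein_summand_le [IsFiniteMeasure μ] (hξ : Measurable ξ)
    (hζ : Measurable ζ) (hV : Measurable V) (hξ1 : ∀ ω, ξ ω ≤ 1)
    (hVd : ∀ ω, V ω = ξ ω + η ω + ζ ω) (hη : Integrable (fun ω => (η ω : ℝ)) μ)
    (hξη : Integrable (fun ω => (ξ ω : ℝ) * η ω) μ) (hC₀ : ∀ j, |f j| ≤ C₀)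
    (hC₁ : ∀ j, |f (j + 1) - f j| ≤ C₁) {p : ℝ} (hp : ∫ ω, (ξ ω : ℝ) ∂μ = p) :
    |∫ ω, (p * f (V ω + 1) - ξ ω * f (V ω)) ∂μ| ≤
      (p ^ 2 + p * (∫ ω, (η ω : ℝ) ∂μ) + ∫ ω, (ξ ω : ℝ) * η ω ∂μ) * C₁ +
      (∫ ω, |(μ[fun ω => (ξ ω : ℝ)|MeasurableSpace.comap ζ inferInstance]) ω - p| ∂μ) * C₀ := by
  have hp0 : 0 ≤ p := hp ▸ integral_nonneg fun ω => Nat.cast_nonneg _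
  have hξint := integrable_natCast_of_le_one (μ := μ) hξ hξ1
  have hfV := integrable_comp_of_abs_le (μ := μ) hV hC₀
  have hfV1 := integrable_comp_of_abs_le (μ := μ) hV (F := fun j => f (j + 1)) fun _ => hC₀ _
  have hfζ1 := integrable_comp_of_abs_le (μ := μ) hζ (F := fun j => f (j + 1)) fun _ => hC₀ _
  have ha : Integrable (fun ω => p * (f (V ω + 1) - f (ζ ω + 1))) μ :=
    (hfV1.sub hfζ1).const_mul p
  have hb : Integrable (fun ω => f (ζ ω + 1) * (p - ξ ω)) μ :=
    ((integrable_const p).sub hξint).bdd_mul hfζ1.aestronglyMeasurable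
      (ae_of_all _ fun ω => (Real.norm_eq_abs _).trans_le (hC₀ _))
  have hc : Integrable (fun ω => ξ ω * (f (ζ ω + 1) - f (V ω))) μ :=
    (hfζ1.sub hfV).bdd_mul (c := 1) hξint.aestronglyMeasurable
      (ae_of_all _ fun ω => by simpa using hξ1 ω)
  have hsplit : ∫ ω, (p * f (V ω + 1) - ξ ω * f (V ω)) ∂μ =
      (∫ ω, p * (f (V ω + 1) - f (ζ ω + 1)) ∂μ) + (∫ ω, f (ζ ω + 1) * (p - ξ ω) ∂μ) +
        ∫ ω, ξ ω * (f (ζ ω + 1) - f (V ω)) ∂μ := by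
    rw [← integral_add ha hb, ← integral_add (f := fun ω => _ + _) (ha.add hb) hc]
    exact integral_congr_ae (ae_of_all _ fun ω => by ring)
  have hg : StronglyMeasurable[MeasurableSpace.comap ζ inferInstance] fun ω => f (ζ ω + 1) :=
    ((measurable_from_top (f := fun j => f (j + 1))).comp
      (comap_measurable ζ)).stronglyMeasurable
  have hA := abs_integral_sub_comp_succ_le hξ hξ1 hVd hη hC₁ hp0
  rw [hp] at hA
  rw [hsplit]
  calc _ ≤ p * C₁ * (p + ∫ ω, (η ω : ℝ) ∂μ) +
        (∫ ω, |(μ[fun ω => (ξ ω : ℝ)|MeasurableSpace.comap ζ inferInstance]) ω - p| ∂μ) * C₀ +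
        C₁ * ∫ ω, (ξ ω : ℝ) * η ω ∂μ :=
        (abs_add_three _ _ _).trans <| add_le_add_three hA
          (abs_integral_mul_const_sub_le hζ.comap_le hg (fun _ => hC₀ _) hξint p)
          (abs_integral_mul_sub_comp_le hξ1 hVd hξη hC₁)
    _ = _ := by ring

end Integral

theorem local_poisson_bound_general
    {Ω : Type*} [MeasurableSpace Ω] (μ : Measure Ω) [IsProbabilityMeasure μ]
    (n : ℕ) (X Y Wt : Fin n → Ω → ℕ) (p : Fin n → ℝ)
    (hXmeas : ∀ i, Measurable (X i))
    (hWtmeas : ∀ i, Measurable (Wt i))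
    (h01 : ∀ i ω, X i ω ≤ 1)
    (hp : ∀ i, μ {ω | X i ω = 1} = ENNReal.ofReal (p i))
    (hp0 : ∀ i, 0 ≤ p i)
    (W : Ω → ℕ) (hW : W = fun ω => ∑ i, X i ω)
    (hdecomp : ∀ i ω, W ω = X i ω + Y i ω + Wt i ω)
    (hYint : ∀ i, Integrable (fun ω => (Y i ω : ℝ)) μ)
    (hXYint : ∀ i, Integrable (fun ω => (X i ω : ℝ) * (Y i ω : ℝ)) μ)
    (l : ℝ) (hl : l = ∑ i, p i)
    (h : ℕ → ℝ)
    (m : ℝ)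
    (f : ℕ → ℝ) (hf : ∀ w : ℕ, l * f (w + 1) - (w : ℝ) * f w = h w - m)
    (C₀ C₁ : ℝ) (hC₀ : ∀ j, |f j| ≤ C₀) (hC₁ : ∀ j, |f (j + 1) - f j| ≤ C₁) :
    |(∫ ω, h (W ω) ∂μ) - m| ≤
      (∑ i, (p i ^ 2 + p i * (∫ ω, (Y i ω : ℝ) ∂μ) +
        ∫ ω, (X i ω : ℝ) * (Y i ω : ℝ) ∂μ)) * C₁ +
      (∑ i, ∫ ω,
        |(μ[fun ω => (X i ω : ℝ)|MeasurableSpace.comap (Wt i) inferInstance]) ω - p i| ∂μ) * C₀ := by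
  have hW_meas : Measurable W := hW ▸ Finset.measurable_sum _ fun i _ => hXmeas i
  have hEX (i : Fin n) : ∫ ω, (X i ω : ℝ) ∂μ = p i := by
    rw [integral_natCast_eq_measureReal_of_le_one (hXmeas i) (h01 i), measureReal_def, hp i,
      ENNReal.toReal_ofReal (hp0 i)]
  have hT_int (i : Fin n) :=
    integrable_stein_summand (μ := μ) (hXmeas i) hW_meas (h01 i) hC₀ (p i)
  have hstein (ω : Ω) : h (W ω) = m + ∑ i, (p i * f (W ω + 1) - X i ω * f (W ω)) := by
    have hWω : (W ω : ℝ) = ∑ i, (X i ω : ℝ) := by rw [hW]; push_cast; rfl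
    rw [Finset.sum_sub_distrib, ← Finset.sum_mul, ← Finset.sum_mul, ← hl, ← hWω, hf]
    ring
  have hmean : ∫ ω, h (W ω) ∂μ - m =
      ∑ i, ∫ ω, (p i * f (W ω + 1) - X i ω * f (W ω)) ∂μ := by
    rw [integral_congr_ae (ae_of_all _ hstein),
      integral_add (integrable_const m) (integrable_finsetSum _ fun i _ => hT_int i),
      integral_finsetSum _ fun i _ => hT_int i, integral_const, probReal_univ, one_smul,
      add_sub_cancel_left]
  rw [hmean, Finset.sum_mul, Finset.sum_mul, ← Finset.sum_add_distrib]
  exact (Finset.abs_sum_le_sum_abs _ _).trans <| Finset.sum_le_sum fun i _ =>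
    abs_integral_stein_summand_le (hXmeas i) (hWtmeas i) hW_meas (h01 i) (hdecomp i) (hYint i)
      (hXYint i) hC₀ hC₁ (hEX i)

theorem local_poisson_bound
    {Ω : Type*} [MeasurableSpace Ω] (μ : Measure Ω) [IsProbabilityMeasure μ]
    (n : ℕ) (X Y Wt : Fin n → Ω → ℕ) (p : Fin n → ℝ)
    (hXmeas : ∀ i, Measurable (X i)) (hYmeas : ∀ i, Measurable (Y i))
    (hWtmeas : ∀ i, Measurable (Wt i))
    (h01 : ∀ i ω, X i ω ≤ 1)
    (hp : ∀ i, μ {ω | X i ω = 1} = ENNReal.ofReal (p i))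
    (hp0 : ∀ i, 0 ≤ p i) (hp1 : ∀ i, p i ≤ 1)
    (W : Ω → ℕ) (hW : W = fun ω => ∑ i, X i ω)
    (hdecomp : ∀ i ω, W ω = X i ω + Y i ω + Wt i ω)
    (hYint : ∀ i, Integrable (fun ω => (Y i ω : ℝ)) μ)
    (hXYint : ∀ i, Integrable (fun ω => (X i ω : ℝ) * (Y i ω : ℝ)) μ)
    (l : ℝ) (hl : l = ∑ i, p i)
    (h : ℕ → ℝ) (hhb : ∃ C, ∀ j, |h j| ≤ C)
    (m : ℝ) (hm : m = ∑' k : ℕ, h k * (Real.exp (-l) * l ^ k / (Nat.factorial k)))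
    (f : ℕ → ℝ) (hf : ∀ w : ℕ, l * f (w + 1) - (w : ℝ) * f w = h w - m)
    (C₀ C₁ : ℝ) (hC₀ : ∀ j, |f j| ≤ C₀) (hC₁ : ∀ j, |f (j + 1) - f j| ≤ C₁) :
    |(∫ ω, h (W ω) ∂μ) - m| ≤
      (∑ i, (p i ^ 2 + p i * (∫ ω, (Y i ω : ℝ) ∂μ) +
        ∫ ω, (X i ω : ℝ) * (Y i ω : ℝ) ∂μ)) * C₁ +
      (∑ i, ∫ ω,
        |(μ[fun ω => (X i ω : ℝ)|MeasurableSpace.comap (Wt i) inferInstance]) ω - p i| ∂μ) * C₀ :=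
  local_poisson_bound_general μ n X Y Wt p hXmeas hWtmeas h01 hp hp0 W hW hdecomp hYint hXYint l hl
    h m f hf C₀ C₁ hC₀ hC₁
end
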